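/- arXiv:2401.15280 — 3 statements merged into one kernel-verified Lean document; each statement's English description precedes it below -/
import Mathlib

section
/- Let a, A, b, B > 0 and D > 0. Then the quadruple integral over the product of rectangles reduces exactly to a double integral against the trapezoidal densities: ∫_{−a/2}^{a/2} ∫_{−b/2}^{b/2} ∫_{−A/2}^{A/2} ∫_{−B/2}^{B/2} [D² + (x_r − x_t)² + (y_r − y_t)²]^{−1} dy_r dx_r dy_t dx_t = aAbB · ∫_0^{(a+A)/2} ∫_0^{(b+B)/2} f_{a,A}(x) · f_{b,B}(y) · [D² + x² + y²]^{−1} dy dx, where x_t ranges over [−a/2, a/2], y_t over [−b/2, b/2], x_r over [−A/2, A/2], and y_r over [−B/2, B/2]. -/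
open MeasureTheory

noncomputable def trapDensity (a b : ℝ) (x : ℝ) : ℝ :=
  if 0 ≤ x ∧ x ≤ |a - b| / 2 then 2 / max a b
  else if |a - b| / 2 < x ∧ x ≤ (a + b) / 2 then (a + b - 2 * x) / (a * b)
  else 0

/-- Fubini for interval integrals of continuous functions. -/
lemma fubini_cont (F : ℝ → ℝ → ℝ) (hF : Continuous (Function.uncurry F)) (a b c d : ℝ) :
    ∫ t in a..b, ∫ r in c..d, F t r = ∫ r in c..d, ∫ t in a..b, F t r := by
  have core : ∀ (p q u v : ℝ), p ≤ q → u ≤ v →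
      ∫ t in p..q, ∫ r in u..v, F t r = ∫ r in u..v, ∫ t in p..q, F t r := by
    intro p q u v hpq huv
    rw [intervalIntegral.integral_of_le hpq, intervalIntegral.integral_of_le huv]
    simp_rw [intervalIntegral.integral_of_le huv, intervalIntegral.integral_of_le hpq]
    apply MeasureTheory.integral_integral_swap
    rw [Measure.prod_restrict]
    have hInt : IntegrableOn (Function.uncurry F) (Set.Icc p q ×ˢ Set.Icc u v)
        (volume.prod volume) := by
      apply hF.continuousOn.integrableOn_compact (isCompact_Icc.prod isCompact_Icc)
    have := hInt.mono_set (Set.prod_mono Set.Ioc_subset_Icc_self Set.Ioc_subset_Icc_self)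
    exact this
  rcases le_total a b with hab | hab <;> rcases le_total c d with hcd | hcd
  · exact core a b c d hab hcd
  · simp only [intervalIntegral.integral_symm d c, intervalIntegral.integral_neg]
    rw [core a b d c hab hcd]
  · simp only [intervalIntegral.integral_symm b a, intervalIntegral.integral_neg]
    rw [core b a c d hab hcd]
  · simp only [intervalIntegral.integral_symm d c, intervalIntegral.integral_symm b a,
      intervalIntegral.integral_neg, neg_neg]
    rw [core b a d c hab hcd]

lemma key1d (a A : ℝ) (ha : 0 < a) (hA : 0 < A) (g : ℝ → ℝ) (hg : Continuous g)
    (hge : ∀ x, g (-x) = g x) :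
    (∫ t in (-(a / 2))..(a / 2), ∫ r in (-(A / 2))..(A / 2), g (r - t))
      = a * A * ∫ x in (0:ℝ)..((a + A) / 2), trapDensity a A x * g x := by
  set G : ℝ → ℝ := fun x => ∫ u in (0:ℝ)..x, g u with hGdef
  have hgint : ∀ p q : ℝ, IntervalIntegrable g volume p q := fun p q =>
    hg.intervalIntegrable p q
  have hGc : Continuous G := intervalIntegral.continuous_primitive hgint 0
  have hGodd : ∀ x : ℝ, G (-x) = -G x := by
    intro x
    have h1 : (∫ u in (0:ℝ)..x, g (-u)) = ∫ u in (-x)..(0:ℝ), g u := by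
      simpa using intervalIntegral.integral_comp_neg (a := (0:ℝ)) (b := x) (f := g)
    have h2 : (∫ u in (0:ℝ)..x, g (-u)) = G x := by simp only [hge]; rfl
    simp only [hGdef]
    rw [intervalIntegral.integral_symm (-x) 0, ← h1, h2]
  set m : ℝ := |a - A| / 2 with hmdef
  set S : ℝ := (a + A) / 2 with hSdef
  have hm0 : 0 ≤ m := by positivity
  have hmS : m ≤ S := by
    have h : |a - A| ≤ a + A := abs_sub_le_iff.mpr ⟨by linarith, by linarith⟩
    rw [hmdef, hSdef]; linarith
  -- LHS = 2 * ∫ x in m..S, G x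
  have inner : ∀ t : ℝ, (∫ r in (-(A / 2))..(A / 2), g (r - t))
      = G (A / 2 - t) - G (-(A / 2) - t) := by
    intro t
    rw [intervalIntegral.integral_comp_sub_right]
    exact (intervalIntegral.integral_interval_sub_left (hgint 0 (A / 2 - t))
      (hgint 0 (-(A / 2) - t))).symm
  have hLHS : (∫ t in (-(a / 2))..(a / 2), ∫ r in (-(A / 2))..(A / 2), g (r - t))
      = 2 * ∫ x in (A / 2 - a / 2)..(A / 2 + a / 2), G x := by
    simp_rw [inner]
    have i1 : IntervalIntegrable (fun t => G (A / 2 - t)) volume (-(a / 2)) (a / 2) :=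
      (hGc.comp (continuous_const.sub continuous_id)).intervalIntegrable _ _
    have i2 : IntervalIntegrable (fun t => G (-(A / 2) - t)) volume (-(a / 2)) (a / 2) :=
      (hGc.comp (continuous_const.sub continuous_id)).intervalIntegrable _ _
    rw [intervalIntegral.integral_sub i1 i2]
    have e1 : (∫ t in (-(a / 2))..(a / 2), G (A / 2 - t))
        = ∫ x in (A / 2 - a / 2)..(A / 2 + a / 2), G x := by
      rw [intervalIntegral.integral_comp_sub_left]
      norm_num
    have e2 : (∫ t in (-(a / 2))..(a / 2), G (-(A / 2) - t))
        = -∫ x in (A / 2 - a / 2)..(A / 2 + a / 2), G x := by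
      have : ∀ t : ℝ, G (-(A / 2) - t) = -G (A / 2 + t) := by
        intro t
        rw [show -(A / 2) - t = -(A / 2 + t) by ring, hGodd]
      simp_rw [this]
      rw [intervalIntegral.integral_neg, intervalIntegral.integral_comp_add_left,
        show A / 2 + -(a / 2) = A / 2 - a / 2 by ring]
    rw [e1, e2]; ring
  have hGint : ∀ p q : ℝ, IntervalIntegrable G volume p q := fun p q =>
    hGc.intervalIntegrable p q
  have hshift : (∫ x in (A / 2 - a / 2)..(A / 2 + a / 2), G x) = ∫ x in m..S, G x := by
    have hQ : A / 2 + a / 2 = S := by rw [hSdef]; ring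
    rcases le_total a A with h | h
    · have hP : A / 2 - a / 2 = m := by rw [hmdef, abs_of_nonpos (by linarith)]; ring
      rw [hP, hQ]
    · have hP : A / 2 - a / 2 = -m := by rw [hmdef, abs_of_nonneg (by linarith)]; ring
      have h1 : (∫ x in (-m)..(0:ℝ), G x) = -∫ x in (0:ℝ)..m, G x := by
        have hcn := intervalIntegral.integral_comp_neg (a := (0:ℝ)) (b := m) (f := G)
        simp only [neg_zero] at hcn
        rw [← hcn]
        simp_rw [hGodd]
        rw [intervalIntegral.integral_neg]
      have hzero : (∫ x in (-m)..m, G x) = 0 := by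
        rw [← intervalIntegral.integral_add_adjacent_intervals (hGint (-m) 0) (hGint 0 m),
          h1]
        ring
      rw [hP, hQ, ← intervalIntegral.integral_add_adjacent_intervals (hGint (-m) m)
        (hGint m S), hzero, zero_add]
  have hedge : 2 / max a A = (a + A - 2 * m) / (a * A) := by
    rcases le_total a A with h | h
    · rw [max_eq_right h, hmdef, abs_of_nonpos (by linarith)]
      rw [div_eq_div_iff (by linarith) (by positivity)]
      ring
    · rw [max_eq_left h, hmdef, abs_of_nonneg (by linarith)]
      rw [div_eq_div_iff (by linarith) (by positivity)]
      ring
  have e1 : Set.EqOn (fun x => trapDensity a A x * g x) (fun x => 2 / max a A * g x)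
      (Set.uIcc 0 m) := by
    intro x hx
    rw [Set.uIcc_of_le hm0] at hx
    simp only
    unfold trapDensity
    rw [if_pos ⟨hx.1, hmdef ▸ hx.2⟩]
  have e2 : Set.EqOn (fun x => trapDensity a A x * g x)
      (fun x => (a + A - 2 * x) / (a * A) * g x) (Set.uIcc m S) := by
    intro x hx
    rw [Set.uIcc_of_le hmS] at hx
    simp only
    unfold trapDensity
    rcases eq_or_lt_of_le hx.1 with he | hlt
    · rw [if_pos ⟨le_trans hm0 hx.1, hmdef ▸ he ▸ le_refl x⟩, hedge, ← he]
    · rw [if_neg (by push_neg; intro _; rw [← hmdef]; linarith),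
        if_pos ⟨hmdef ▸ hlt, hSdef ▸ hx.2⟩]
  have itrap : ∀ (p q : ℝ) (F : ℝ → ℝ), Continuous F →
      Set.EqOn (fun x => trapDensity a A x * g x) F (Set.uIcc p q) →
      IntervalIntegrable (fun x => trapDensity a A x * g x) volume p q := by
    intro p q F hF hEq
    rw [intervalIntegrable_iff]
    have hFint : IntegrableOn F (Set.uIoc p q) volume := by
      rw [← intervalIntegrable_iff]
      exact hF.intervalIntegrable p q
    exact hFint.congr_fun ((hEq.mono Set.uIoc_subset_uIcc).symm) measurableSet_uIoc
  have hRHS : (∫ x in (0:ℝ)..S, trapDensity a A x * g x)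
      = 2 / (a * A) * ∫ x in m..S, G x := by
    have hc2 : Continuous fun x : ℝ => (a + A - 2 * x) / (a * A) * g x :=
      ((continuous_const.sub (continuous_const.mul continuous_id)).div_const _).mul hg
    rw [← intervalIntegral.integral_add_adjacent_intervals
      (itrap 0 m _ (continuous_const.mul hg) e1) (itrap m S _ hc2 e2),
      intervalIntegral.integral_congr e1, intervalIntegral.integral_congr e2,
      intervalIntegral.integral_const_mul]
    have hu : ∀ x ∈ Set.uIcc m S, HasDerivAt (fun x => (a + A - 2 * x) / (a * A))
        (-2 / (a * A)) x := by
      intro x _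
      have h1 : HasDerivAt (fun x : ℝ => a + A - 2 * x) (-2) x := by
        simpa using ((hasDerivAt_id x).const_mul (2:ℝ)).const_sub (a + A)
      simpa using h1.div_const (a * A)
    have hv : ∀ x ∈ Set.uIcc m S, HasDerivAt G (g x) x := by
      intro x _
      exact intervalIntegral.integral_hasDerivAt_right (hgint 0 x)
        hg.stronglyMeasurable.stronglyMeasurableAtFilter hg.continuousAt
    rw [intervalIntegral.integral_mul_deriv_eq_deriv_mul hu hv
      (Continuous.intervalIntegrable continuous_const _ _) (hgint m S)]
    rw [intervalIntegral.integral_const_mul, hedge]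
    have hS0 : a + A - 2 * S = 0 := by rw [hSdef]; ring
    rw [hS0, show (∫ x in (0:ℝ)..m, g x) = G m from rfl]
    ring
  rw [hLHS, hshift, hRHS]
  have hane : a ≠ 0 := ne_of_gt ha
  have hAne : A ≠ 0 := ne_of_gt hA
  field_simp


lemma contInvAux (D : ℝ) (hD : 0 < D) {X : Type*} [TopologicalSpace X] (f g : X → ℝ)
    (hf : Continuous f) (hg : Continuous g) :
    Continuous fun x => (D ^ 2 + f x ^ 2 + g x ^ 2)⁻¹ :=
  ((continuous_const.add (hf.pow 2)).add (hg.pow 2)).inv₀ fun x => ne_of_gt (by simp only [Pi.add_apply, Pi.pow_apply]; nlinarith [pow_pos hD 2, sq_nonneg (f x), sq_nonneg (g x)])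

/-- Reduction of the quadruple integral over a product of rectangles to a double
integral against trapezoidal densities:
`∫∫∫∫ [D² + (x_r − x_t)² + (y_r − y_t)²]⁻¹
  = aAbB ∫_0^{(a+A)/2} ∫_0^{(b+B)/2} f_{a,A}(x) f_{b,B}(y) [D² + x² + y²]⁻¹ dy dx`. -/
theorem stmt5 (a A b B D : ℝ) (ha : 0 < a) (hA : 0 < A) (hb : 0 < b) (hB : 0 < B)
    (hD : 0 < D) :
    (∫ xt in (-(a / 2))..(a / 2), ∫ yt in (-(b / 2))..(b / 2),
      ∫ xr in (-(A / 2))..(A / 2), ∫ yr in (-(B / 2))..(B / 2),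
        (D ^ 2 + (xr - xt) ^ 2 + (yr - yt) ^ 2)⁻¹) =
    a * A * b * B *
      ∫ x in (0 : ℝ)..((a + A) / 2), ∫ y in (0 : ℝ)..((b + B) / 2),
        trapDensity a A x * trapDensity b B y * (D ^ 2 + x ^ 2 + y ^ 2)⁻¹ := by
  have swap1 : ∀ xt : ℝ,
      (∫ yt in (-(b / 2))..(b / 2), ∫ xr in (-(A / 2))..(A / 2),
        ∫ yr in (-(B / 2))..(B / 2), (D ^ 2 + (xr - xt) ^ 2 + (yr - yt) ^ 2)⁻¹)
      = ∫ xr in (-(A / 2))..(A / 2), ∫ yt in (-(b / 2))..(b / 2),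
        ∫ yr in (-(B / 2))..(B / 2), (D ^ 2 + (xr - xt) ^ 2 + (yr - yt) ^ 2)⁻¹ := by
    intro xt
    exact fubini_cont
      (fun yt xr => ∫ yr in (-(B / 2))..(B / 2),
        (D ^ 2 + (xr - xt) ^ 2 + (yr - yt) ^ 2)⁻¹)
      (intervalIntegral.continuous_parametric_intervalIntegral_of_continuous'
        (f := fun (p : ℝ × ℝ) yr => (D ^ 2 + (p.2 - xt) ^ 2 + (yr - p.1) ^ 2)⁻¹)
        (contInvAux D hD _ _ (by fun_prop) (by fun_prop)) _ _) _ _ _ _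
  simp_rw [swap1]
  have hgxc : Continuous fun u : ℝ => ∫ yt in (-(b / 2))..(b / 2),
      ∫ yr in (-(B / 2))..(B / 2), (D ^ 2 + u ^ 2 + (yr - yt) ^ 2)⁻¹ := by
    apply intervalIntegral.continuous_parametric_intervalIntegral_of_continuous'
      (f := fun u yt => ∫ yr in (-(B / 2))..(B / 2), (D ^ 2 + u ^ 2 + (yr - yt) ^ 2)⁻¹)
    exact intervalIntegral.continuous_parametric_intervalIntegral_of_continuous'
      (f := fun (p : ℝ × ℝ) yr => (D ^ 2 + p.1 ^ 2 + (yr - p.2) ^ 2)⁻¹)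
      (contInvAux D hD _ _ (by fun_prop) (by fun_prop)) _ _
  have hgxe : ∀ u : ℝ, (fun u : ℝ => ∫ yt in (-(b / 2))..(b / 2),
      ∫ yr in (-(B / 2))..(B / 2), (D ^ 2 + u ^ 2 + (yr - yt) ^ 2)⁻¹) (-u)
      = (fun u : ℝ => ∫ yt in (-(b / 2))..(b / 2),
      ∫ yr in (-(B / 2))..(B / 2), (D ^ 2 + u ^ 2 + (yr - yt) ^ 2)⁻¹) u := by
    intro u; simp only [neg_sq]
  have step2 : (∫ xt in (-(a / 2))..(a / 2), ∫ xr in (-(A / 2))..(A / 2),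
      ∫ yt in (-(b / 2))..(b / 2), ∫ yr in (-(B / 2))..(B / 2),
        (D ^ 2 + (xr - xt) ^ 2 + (yr - yt) ^ 2)⁻¹)
      = a * A * ∫ x in (0 : ℝ)..((a + A) / 2), trapDensity a A x *
          ∫ yt in (-(b / 2))..(b / 2), ∫ yr in (-(B / 2))..(B / 2),
            (D ^ 2 + x ^ 2 + (yr - yt) ^ 2)⁻¹ :=
    key1d a A ha hA _ hgxc hgxe
  rw [step2]
  have step3 : ∀ x : ℝ, (∫ yt in (-(b / 2))..(b / 2), ∫ yr in (-(B / 2))..(B / 2),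
      (D ^ 2 + x ^ 2 + (yr - yt) ^ 2)⁻¹)
      = b * B * ∫ y in (0 : ℝ)..((b + B) / 2),
          trapDensity b B y * (D ^ 2 + x ^ 2 + y ^ 2)⁻¹ := by
    intro x
    exact key1d b B hb hB (fun y => (D ^ 2 + x ^ 2 + y ^ 2)⁻¹)
      (contInvAux D hD _ _ continuous_const continuous_id) (fun y => by simp only [neg_sq])
  simp only [step3]
  have final : ∀ x : ℝ, trapDensity a A x * (b * B * ∫ y in (0 : ℝ)..((b + B) / 2),
      trapDensity b B y * (D ^ 2 + x ^ 2 + y ^ 2)⁻¹)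
      = b * B * ∫ y in (0 : ℝ)..((b + B) / 2),
          trapDensity a A x * trapDensity b B y * (D ^ 2 + x ^ 2 + y ^ 2)⁻¹ := by
    intro x
    rw [show trapDensity a A x * (b * B * ∫ y in (0 : ℝ)..((b + B) / 2),
        trapDensity b B y * (D ^ 2 + x ^ 2 + y ^ 2)⁻¹)
      = b * B * (trapDensity a A x * ∫ y in (0 : ℝ)..((b + B) / 2),
        trapDensity b B y * (D ^ 2 + x ^ 2 + y ^ 2)⁻¹) from by ring,
      ← intervalIntegral.integral_const_mul]
    simp_rw [← mul_assoc]
  simp only [final]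
  rw [intervalIntegral.integral_const_mul]
  ring
end

section
/- Let a, b > 0 and c > 0. Then ∫_0^{(a+b)/2} f_{a,b}(y)/(c + y²) dy = (2/(max(a,b)·√c))·arctan(|a−b|/(2√c)) + ((a+b)/(ab·√c))·[arctan((a+b)/(2√c)) − arctan(|a−b|/(2√c))] + (1/(ab))·ln(((a−b)² + 4c)/((a+b)² + 4c)). -/
open MeasureTheory

lemma integral_inv_c_add_sq (c : ℝ) (hc : 0 < c) (p q : ℝ) :
    ∫ y in p..q, 1 / (c + y ^ 2) =
      (1 / Real.sqrt c) * (Real.arctan (q / Real.sqrt c) - Real.arctan (p / Real.sqrt c)) := by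
  set s := Real.sqrt c with hsdef
  have hs0 : 0 < s := Real.sqrt_pos.mpr hc
  have hs2 : s ^ 2 = c := Real.sq_sqrt hc.le
  have key : ∀ y : ℝ, HasDerivAt (fun y => (1 / s) * Real.arctan (y / s))
      (1 / (c + y ^ 2)) y := by
    intro y
    have h1 : HasDerivAt (fun y : ℝ => y / s) (1 / s) y := by
      simpa using (hasDerivAt_id y).div_const s
    have h2 := (Real.hasDerivAt_arctan (y / s)).comp y h1
    have h3 := h2.const_mul (1 / s)
    refine h3.congr_deriv ?_
    symm
    have hpos : c + y ^ 2 > 0 := by positivity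
    rw [← hs2]
    field_simp
  rw [intervalIntegral.integral_eq_sub_of_hasDerivAt (fun y _ => key y) ?_]
  · ring
  · apply Continuous.intervalIntegrable
    apply Continuous.div continuous_const (by continuity)
    intro y; positivity

lemma integral_two_mul_div (c : ℝ) (hc : 0 < c) (p q : ℝ) :
    ∫ y in p..q, 2 * y / (c + y ^ 2) = Real.log (c + q ^ 2) - Real.log (c + p ^ 2) := by
  have key : ∀ y : ℝ, HasDerivAt (fun y => Real.log (c + y ^ 2)) (2 * y / (c + y ^ 2)) y := by
    intro y
    have hpos : 0 < c + y ^ 2 := by positivity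
    have h1 : HasDerivAt (fun y : ℝ => c + y ^ 2) (2 * y) y := by
      simpa using ((hasDerivAt_pow 2 y).const_add c)
    simpa [div_eq_mul_inv] using h1.log hpos.ne'
  rw [intervalIntegral.integral_eq_sub_of_hasDerivAt (fun y _ => key y) ?_]
  apply Continuous.intervalIntegrable
  apply Continuous.div (by continuity) (by continuity)
  intro y; positivity

set_option maxHeartbeats 1600000 in
/-- Closed form of `∫_0^{(a+b)/2} f_{a,b}(y)/(c + y²) dy` for `a, b, c > 0`. -/
theorem stmt8 (a b c : ℝ) (ha : 0 < a) (hb : 0 < b) (hc : 0 < c) :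
    (∫ y in (0 : ℝ)..((a + b) / 2), trapDensity a b y / (c + y ^ 2)) =
      (2 / (max a b * Real.sqrt c)) * Real.arctan (|a - b| / (2 * Real.sqrt c)) +
      ((a + b) / (a * b * Real.sqrt c)) *
        (Real.arctan ((a + b) / (2 * Real.sqrt c)) -
          Real.arctan (|a - b| / (2 * Real.sqrt c))) +
      (1 / (a * b)) * Real.log (((a - b) ^ 2 + 4 * c) / ((a + b) ^ 2 + 4 * c)) := by
  set s := Real.sqrt c with hsdef
  have hs0 : 0 < s := Real.sqrt_pos.mpr hc
  have hs2 : s ^ 2 = c := Real.sq_sqrt hc.le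
  set m : ℝ := |a - b| / 2 with hmdef
  set M : ℝ := (a + b) / 2 with hMdef
  have hm0 : 0 ≤ m := by positivity
  have habs : |a - b| < a + b := by
    rw [abs_lt]; constructor <;> nlinarith
  have hmM : m ≤ M := by rw [hmdef, hMdef]; linarith
  have hmax : 0 < max a b := lt_max_of_lt_left ha
  -- continuous pieces
  have hg1cont : Continuous fun y : ℝ => (2 / max a b) * (1 / (c + y ^ 2)) :=
    continuous_const.mul (Continuous.div continuous_const (by continuity)
      (fun y => by positivity))
  have hg2cont : Continuous fun y : ℝ =>
      ((a + b) / (a * b)) * (1 / (c + y ^ 2)) - (1 / (a * b)) * (2 * y / (c + y ^ 2)) := by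
    apply Continuous.sub
    · exact continuous_const.mul (Continuous.div continuous_const (by continuity)
        (fun y => by positivity))
    · exact continuous_const.mul (Continuous.div (by continuity) (by continuity)
        (fun y => by positivity))
  -- first piece equality on Icc 0 m
  have heq1 : Set.EqOn (fun y => trapDensity a b y / (c + y ^ 2))
      (fun y : ℝ => (2 / max a b) * (1 / (c + y ^ 2))) (Set.uIcc 0 m) := by
    intro y hy
    rw [Set.uIcc_of_le hm0] at hy
    have hval : trapDensity a b y = 2 / max a b := by
      rw [trapDensity, if_pos]; exact ⟨hy.1, hy.2⟩
    simp only [hval]; ring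
  -- second piece equality on Ioc m M
  have heq2 : ∀ y ∈ Set.Ioc m M, trapDensity a b y / (c + y ^ 2) =
      ((a + b) / (a * b)) * (1 / (c + y ^ 2)) - (1 / (a * b)) * (2 * y / (c + y ^ 2)) := by
    intro y hy
    have h1 : ¬ (0 ≤ y ∧ y ≤ |a - b| / 2) := by
      rintro ⟨-, h⟩; exact absurd h (not_le.mpr hy.1)
    have hval : trapDensity a b y = (a + b - 2 * y) / (a * b) := by
      rw [trapDensity, if_neg h1, if_pos]; exact ⟨hy.1, hy.2⟩
    have hcy : c + y ^ 2 ≠ 0 := by positivity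
    simp only [hval]
    field_simp
  have heq2' : Set.EqOn (fun y => trapDensity a b y / (c + y ^ 2))
      (fun y : ℝ => ((a + b) / (a * b)) * (1 / (c + y ^ 2))
        - (1 / (a * b)) * (2 * y / (c + y ^ 2))) (Set.Ioc m M) := heq2
  -- integrability on each piece
  have hI1 : IntervalIntegrable (fun y => trapDensity a b y / (c + y ^ 2)) volume 0 m := by
    apply (hg1cont.intervalIntegrable 0 m).congr
    intro x hx
    rw [Set.uIoc_of_le hm0] at hx
    exact (heq1 (by rw [Set.uIcc_of_le hm0]; exact Set.Ioc_subset_Icc_self hx)).symm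
  have hI2 : IntervalIntegrable (fun y => trapDensity a b y / (c + y ^ 2)) volume m M := by
    apply (hg2cont.intervalIntegrable m M).congr
    intro x hx
    rw [Set.uIoc_of_le hmM] at hx
    exact (heq2 x hx).symm
  have hsplit : (∫ y in (0:ℝ)..M, trapDensity a b y / (c + y ^ 2)) =
      (∫ y in (0:ℝ)..m, trapDensity a b y / (c + y ^ 2)) +
      (∫ y in m..M, trapDensity a b y / (c + y ^ 2)) :=
    (intervalIntegral.integral_add_adjacent_intervals hI1 hI2).symm
  have hintA : (∫ y in (0:ℝ)..m, trapDensity a b y / (c + y ^ 2)) =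
      (2 / max a b) * ((1 / s) * (Real.arctan (m / s) - Real.arctan (0 / s))) := by
    rw [intervalIntegral.integral_congr heq1, intervalIntegral.integral_const_mul,
      integral_inv_c_add_sq c hc]
  have hintB : (∫ y in m..M, trapDensity a b y / (c + y ^ 2)) =
      ((a + b) / (a * b)) * ((1 / s) * (Real.arctan (M / s) - Real.arctan (m / s))) -
      (1 / (a * b)) * (Real.log (c + M ^ 2) - Real.log (c + m ^ 2)) := by
    have hcong : (∫ y in m..M, trapDensity a b y / (c + y ^ 2)) =
        ∫ y in m..M, ((a + b) / (a * b)) * (1 / (c + y ^ 2))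
          - (1 / (a * b)) * (2 * y / (c + y ^ 2)) := by
      apply intervalIntegral.integral_congr_ae
      apply Filter.Eventually.of_forall
      intro x hx
      rw [Set.uIoc_of_le hmM] at hx
      exact heq2 x hx
    have hJ1 : IntervalIntegrable
        (fun y : ℝ => ((a + b) / (a * b)) * (1 / (c + y ^ 2))) volume m M :=
      Continuous.intervalIntegrable (continuous_const.mul
        (Continuous.div continuous_const (by continuity) (fun y => by positivity))) m M
    have hJ2 : IntervalIntegrable
        (fun y : ℝ => (1 / (a * b)) * (2 * y / (c + y ^ 2))) volume m M :=
      Continuous.intervalIntegrable (continuous_const.mul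
        (Continuous.div (by continuity) (by continuity) (fun y => by positivity))) m M
    rw [hcong, intervalIntegral.integral_sub hJ1 hJ2, intervalIntegral.integral_const_mul,
      intervalIntegral.integral_const_mul, integral_inv_c_add_sq c hc,
      integral_two_mul_div c hc]
  rw [hsplit, hintA, hintB]
  -- identify arctan arguments
  have hms : m / s = |a - b| / (2 * s) := by rw [hmdef, div_div]
  have hMs : M / s = (a + b) / (2 * s) := by rw [hMdef, div_div]
  -- log identity
  have hm2 : m ^ 2 = (a - b) ^ 2 / 4 := by rw [hmdef, div_pow, sq_abs]; norm_num
  have hM2 : M ^ 2 = (a + b) ^ 2 / 4 := by rw [hMdef, div_pow]; norm_num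
  have hlog : Real.log (((a - b) ^ 2 + 4 * c) / ((a + b) ^ 2 + 4 * c)) =
      Real.log (c + m ^ 2) - Real.log (c + M ^ 2) := by
    have h1 : ((a - b) ^ 2 + 4 * c) / ((a + b) ^ 2 + 4 * c) = (c + m ^ 2) / (c + M ^ 2) := by
      rw [hm2, hM2]
      have hd : (a + b) ^ 2 + 4 * c ≠ 0 := by positivity
      have hd2 : c + (a + b) ^ 2 / 4 ≠ 0 := by positivity
      field_simp
      ring
    rw [h1, Real.log_div (by positivity) (by positivity)]
  rw [hms, hMs, hlog]
  simp only [zero_div, Real.arctan_zero]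
  field_simp
  ring
end

section
/- Let a, b, D > 0. Then ∫_{−a/2}^{a/2} ∫_{−b/2}^{b/2} [D² + (u − v)²]^{−1} dv du = (2ab/(max(a,b)·D))·arctan(|a−b|/(2D)) + ((a+b)/D)·[arctan((a+b)/(2D)) − arctan(|a−b|/(2D))] + ln(((a−b)² + 4D²)/((a+b)² + 4D²)). -/
open MeasureTheory Real

lemma cont_inv (d c : ℝ) (hd : 0 < d) :
    Continuous fun x : ℝ => (d ^ 2 + (x - c) ^ 2)⁻¹ := by
  apply Continuous.inv₀
  · continuity
  · intro x; positivity

lemma integral_inv_sq (d c l r : ℝ) (hd : 0 < d) :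
    ∫ x in l..r, (d ^ 2 + (x - c) ^ 2)⁻¹
      = (Real.arctan ((r - c) / d) - Real.arctan ((l - c) / d)) / d := by
  have hd' : d ≠ 0 := hd.ne'
  have h : ∀ x ∈ Set.uIcc l r, HasDerivAt (fun x => Real.arctan ((x - c) / d) / d)
      ((d ^ 2 + (x - c) ^ 2)⁻¹) x := by
    intro x _
    have h1 : HasDerivAt (fun x : ℝ => (x - c) / d) (1 / d) x := by
      simpa using ((hasDerivAt_id x).sub_const c).div_const d
    have h3 := ((Real.hasDerivAt_arctan ((x - c) / d)).comp x h1).div_const d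
    refine h3.congr_deriv ?_
    have hne : 1 + ((x - c) / d) ^ 2 ≠ 0 := by positivity
    field_simp
  rw [intervalIntegral.integral_eq_sub_of_hasDerivAt h
    ((cont_inv d c hd).intervalIntegrable l r)]
  ring

lemma integral_arctan' (d c l r : ℝ) (hd : 0 < d) :
    ∫ x in l..r, Real.arctan ((x - c) / d)
      = ((r - c) * Real.arctan ((r - c) / d) - d / 2 * Real.log (d ^ 2 + (r - c) ^ 2))
      - ((l - c) * Real.arctan ((l - c) / d) - d / 2 * Real.log (d ^ 2 + (l - c) ^ 2)) := by
  have hd' : d ≠ 0 := hd.ne'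
  have h : ∀ x ∈ Set.uIcc l r, HasDerivAt
      (fun x => (x - c) * Real.arctan ((x - c) / d) - d / 2 * Real.log (d ^ 2 + (x - c) ^ 2))
      (Real.arctan ((x - c) / d)) x := by
    intro x _
    have h1 : HasDerivAt (fun x : ℝ => (x - c) / d) (1 / d) x := by
      simpa using ((hasDerivAt_id x).sub_const c).div_const d
    have h2 := (Real.hasDerivAt_arctan ((x - c) / d)).comp x h1
    have h3 : HasDerivAt (fun x : ℝ => (x - c) * Real.arctan ((x - c) / d))
        (1 * Real.arctan ((x - c) / d) + (x - c) * (1 / (1 + ((x - c) / d) ^ 2) * (1 / d))) x :=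
      ((hasDerivAt_id x).sub_const c).mul h2
    have h4 : HasDerivAt (fun x : ℝ => d ^ 2 + (x - c) ^ 2) (2 * (x - c)) x := by
      simpa using (((hasDerivAt_id x).sub_const c).pow 2).const_add (d ^ 2)
    have hpos : d ^ 2 + (x - c) ^ 2 ≠ 0 := by positivity
    have h6 := h3.sub ((h4.log hpos).const_mul (d / 2))
    refine h6.congr_deriv ?_
    have hne : 1 + ((x - c) / d) ^ 2 ≠ 0 := by positivity
    field_simp
    ring
  have hcont : Continuous fun x : ℝ => Real.arctan ((x - c) / d) :=
    Real.continuous_arctan.comp (by continuity)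
  rw [intervalIntegral.integral_eq_sub_of_hasDerivAt h (hcont.intervalIntegrable l r)]

/-- Closed form of the overall channel power gain (up to `1/(4π)²`) between two
parallel line segments of lengths `a` and `b` at distance `D`:
`∫_{−a/2}^{a/2} ∫_{−b/2}^{b/2} [D² + (u−v)²]⁻¹ dv du
  = (2ab/(max(a,b)·D)) arctan(|a−b|/(2D))
    + ((a+b)/D)[arctan((a+b)/(2D)) − arctan(|a−b|/(2D))]
    + ln(((a−b)² + 4D²)/((a+b)² + 4D²))`. -/
theorem stmt9 (a b D : ℝ) (ha : 0 < a) (hb : 0 < b) (hD : 0 < D) :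
    (∫ u in (-(a / 2))..(a / 2), ∫ v in (-(b / 2))..(b / 2),
        (D ^ 2 + (u - v) ^ 2)⁻¹) =
      (2 * a * b / (max a b * D)) * Real.arctan (|a - b| / (2 * D)) +
      ((a + b) / D) *
        (Real.arctan ((a + b) / (2 * D)) - Real.arctan (|a - b| / (2 * D))) +
      Real.log (((a - b) ^ 2 + 4 * D ^ 2) / ((a + b) ^ 2 + 4 * D ^ 2)) := by
  have hD' : D ≠ 0 := hD.ne'
  have hinner : ∀ u : ℝ, (∫ v in (-(b / 2))..(b / 2), (D ^ 2 + (u - v) ^ 2)⁻¹)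
      = (Real.arctan ((u - -(b / 2)) / D) - Real.arctan ((u - b / 2) / D)) / D := by
    intro u
    have h0 : (∫ v in (-(b / 2))..(b / 2), (D ^ 2 + (u - v) ^ 2)⁻¹)
        = ∫ v in (-(b / 2))..(b / 2), (D ^ 2 + (v - u) ^ 2)⁻¹ := by
      congr 1; ext v; ring_nf
    rw [h0, integral_inv_sq D u _ _ hD,
      show (b / 2 - u) / D = -((u - b / 2) / D) by ring,
      show (-(b / 2) - u) / D = -((u - -(b / 2)) / D) by ring,
      Real.arctan_neg, Real.arctan_neg]
    ring
  simp_rw [hinner]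
  have hc : ∀ c : ℝ, Continuous fun u : ℝ => Real.arctan ((u - c) / D) := fun c =>
    Real.continuous_arctan.comp (by continuity)
  rw [intervalIntegral.integral_div,
    intervalIntegral.integral_sub ((hc (-(b/2))).intervalIntegrable _ _)
      ((hc (b/2)).intervalIntegrable _ _),
    integral_arctan' D (-(b/2)) _ _ hD, integral_arctan' D (b/2) _ _ hD]
  rw [show (a / 2 - -(b / 2)) / D = (a + b) / (2 * D) by field_simp; try ring,
    show (-(a / 2) - -(b / 2)) / D = -((a - b) / (2 * D)) by field_simp; try ring,
    show (a / 2 - b / 2) / D = (a - b) / (2 * D) by field_simp; try ring,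
    show (-(a / 2) - b / 2) / D = -((a + b) / (2 * D)) by field_simp; try ring,
    Real.arctan_neg, Real.arctan_neg,
    show D ^ 2 + (a / 2 - -(b / 2)) ^ 2 = ((a + b) ^ 2 + 4 * D ^ 2) / 4 by ring,
    show D ^ 2 + (-(a / 2) - -(b / 2)) ^ 2 = ((a - b) ^ 2 + 4 * D ^ 2) / 4 by ring,
    show D ^ 2 + (a / 2 - b / 2) ^ 2 = ((a - b) ^ 2 + 4 * D ^ 2) / 4 by ring,
    show D ^ 2 + (-(a / 2) - b / 2) ^ 2 = ((a + b) ^ 2 + 4 * D ^ 2) / 4 by ring,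
    Real.log_div (by positivity) (by norm_num : (4:ℝ) ≠ 0),
    Real.log_div (by positivity) (by norm_num : (4:ℝ) ≠ 0),
    Real.log_div (by positivity) (by positivity)]
  generalize Real.arctan ((a + b) / (2 * D)) = A1
  generalize Real.log ((a - b) ^ 2 + 4 * D ^ 2) = L1
  generalize Real.log ((a + b) ^ 2 + 4 * D ^ 2) = L2
  rcases le_total a b with h | h
  · rw [abs_of_nonpos (by linarith), max_eq_right h,
      show -(a - b) / (2 * D) = -((a - b) / (2 * D)) by ring, Real.arctan_neg]
    generalize Real.arctan ((a - b) / (2 * D)) = A2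
    field_simp
    ring
  · rw [abs_of_nonneg (by linarith), max_eq_left h]
    generalize Real.arctan ((a - b) / (2 * D)) = A2
    field_simp
    ring
end
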